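/- Let $\sigma: \mathbb{H} \to \mathbb{H}$ be an $\mathbb{R}$-linear map satisfying $\sigma(xy) = \sigma(y)\sigma(x)$ for all $x, y \in \mathbb{H}$. Then $\sigma^2 = \mathrm{Id}$ if and only if either $\sigma = \sigma_c$ (the standard quaternionic conjugation) or $\sigma = C_\alpha \circ \sigma_c$ for some $\alpha \in \mathbb{H}$ with $\alpha^2 = -1$, where $C_\alpha(x) := \alpha x \alpha^{-1}$. -/

import Mathlib

/-!
The map `x ↦ σ (star x)` is an `ℝ`-algebra endomorphism of `ℍ`, and every such endomorphism is
inner (Skolem–Noether for `ℍ`), so `σ x = β x̄ β⁻¹`. Then `σ (σ x) = γ x γ⁻¹` with `γ = β β̄⁻¹`,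
hence `σ` is an involution iff `γ` is central, i.e. real. As `β = γ β̄`, this forces `γ = ±1`:
either `β` is real and `σ = star`, or `β` is purely imaginary and `α = β / ‖β‖` has `α² = -1`.

The inner automorphism is found by averaging. If `p² = i² = -1`, then `c - p c i` intertwines `p`
with `i` for every `c`; applying this to `(q, j) = (φ j, j)` and then to `(p, i) = (φ i, i)`, the
second step preserves the first intertwining, and one of `c`, `c j` keeps the result nonzero.
-/

open Quaternion

section Intertwiner

variable {A : Type*} [Ring A] {p i q j : A}

def intertwiner (p i c : A) : A := c - p * c * i

theorem mul_intertwiner (hp : p * p = -1) (hi : i * i = -1) (c : A) :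
    p * intertwiner p i c = intertwiner p i c * i := by
  simp only [intertwiner, mul_sub, sub_mul, ← mul_assoc, hp]
  simp only [mul_assoc, hi]
  noncomm_ring

theorem mul_intertwiner_of_anticomm (hqp : q * p = -(p * q)) (hji : j * i = -(i * j))
    {c : A} (hc : q * c = c * j) :
    q * intertwiner p i c = intertwiner p i c * j := by
  calc q * intertwiner p i c = q * c + -(q * p) * c * i := by
        simp only [intertwiner]; noncomm_ring
    _ = c * j + p * c * (j * i) := by rw [hqp, neg_neg, mul_assoc p q c, hc]; noncomm_ring
    _ = intertwiner p i c * j := by rw [hji, intertwiner]; noncomm_ring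

theorem intertwiner_mul_of_intertwiner_eq_zero (hji : j * i = -(i * j)) {c : A}
    (hc : intertwiner p i c = 0) : intertwiner p i (c * j) = c * j + c * j := by
  have hc' : p * c * i = c := (sub_eq_zero.mp hc).symm
  calc intertwiner p i (c * j) = c * j - p * c * (j * i) := by
        simp only [intertwiner, mul_assoc]
    _ = c * j + c * j := by rw [hji, mul_neg, ← mul_assoc, hc']; noncomm_ring

variable [NoZeroDivisors A] [CharZero A]

theorem exists_intertwiner_ne_zero (hji : j * i = -(i * j)) (hj : j ≠ 0) {c : A} (hc : c ≠ 0) :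
    ∃ d ∈ ({c, c * j} : Set A), intertwiner p i d ≠ 0 := by
  by_cases h : intertwiner p i c = 0
  · refine ⟨c * j, Or.inr rfl, ?_⟩
    rw [intertwiner_mul_of_intertwiner_eq_zero hji h, Ne, add_self_eq_zero]
    exact mul_ne_zero hc hj
  · exact ⟨c, Or.inl rfl, h⟩

theorem exists_ne_zero_mul_eq_mul_of_quaternion_relations (hp : p * p = -1) (hq : q * q = -1)
    (hqp : q * p = -(p * q)) (hi : i * i = -1) (hj : j * j = -1) (hji : j * i = -(i * j)) :
    ∃ β ≠ 0, p * β = β * i ∧ q * β = β * j := by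
  have ne_zero_of_mul_self {x : A} (hx : x * x = -1) : x ≠ 0 := by
    rintro rfl
    simp at hx
  have hij : i * j = -(j * i) := by rw [hji, neg_neg]
  obtain ⟨c, -, hc⟩ := exists_intertwiner_ne_zero (p := q) hij (ne_zero_of_mul_self hi) one_ne_zero
  obtain ⟨d, hd, hd0⟩ := exists_intertwiner_ne_zero (p := p) hji (ne_zero_of_mul_self hj) hc
  have hqd : q * d = d * j := by
    have hqc := mul_intertwiner hq hj c
    rcases hd with rfl | rfl
    · exact hqc
    · rw [← mul_assoc, hqc, mul_assoc]
  exact ⟨_, hd0, mul_intertwiner hp hi d, mul_intertwiner_of_anticomm hqp hji hqd⟩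

end Intertwiner

@[simps]
def LinearMap.starCompAlgHom {R A : Type*} [CommSemiring R] [StarRing R] [TrivialStar R]
    [Semiring A] [StarRing A] [Algebra R A] [StarModule R A] (σ : A →ₗ[R] A)
    (hanti : ∀ x y, σ (x * y) = σ y * σ x) (h1 : σ 1 = 1) : A →ₐ[R] A where
  toFun x := σ (star x)
  map_one' := by rw [star_one, h1]
  map_mul' x y := by rw [star_mul, hanti]
  map_zero' := by rw [star_zero, map_zero]
  map_add' x y := by rw [star_add, map_add]
  commutes' r := by
    rw [← algebraMap_star_comm, star_trivial, Algebra.algebraMap_eq_smul_one, map_smul, h1]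

namespace Quaternion

instance instStarModule {R : Type*} [CommRing R] [StarRing R] [TrivialStar R] :
    StarModule R ℍ[R] :=
  ⟨fun r x => by rw [star_smul, star_trivial r]⟩

theorem exists_algHom_eq_conj (φ : ℍ[ℝ] →ₐ[ℝ] ℍ[ℝ]) : ∃ β ≠ 0, ∀ x, φ x = β * x * β⁻¹ := by
  have : CharZero ℍ[ℝ] := Algebra.charZero_of_charZero ℝ _
  let e := QuaternionAlgebra.Basis.self ℝ (c₁ := -1) (c₂ := 0) (c₃ := -1)
  let i : ℍ[ℝ] := e.i
  let j : ℍ[ℝ] := e.j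
  have hi : i * i = -1 := show e.i * e.i = -1 by simp
  have hj : j * j = -1 := show e.j * e.j = -1 by simp
  have hji : j * i = -(i * j) := show e.j * e.i = -(e.i * e.j) by simp
  obtain ⟨β, hβ, hβi, hβj⟩ := exists_ne_zero_mul_eq_mul_of_quaternion_relations
    (p := φ i) (q := φ j) (by rw [← map_mul, hi, map_neg, map_one])
    (by rw [← map_mul, hj, map_neg, map_one]) (by rw [← map_mul, ← map_mul, hji, map_neg])
    hi hj hji
  let conj := MulSemiringAction.toAlgHom ℝ ℍ[ℝ] (ConjAct.toConjAct (Units.mk0 β hβ))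
  have hconj (x) : conj x = β * x * β⁻¹ := by simp [conj, ConjAct.units_smul_def]
  have hφ : φ = conj := hom_ext
    (show φ i = conj i by rw [hconj, eq_mul_inv_iff_mul_eq₀ hβ, hβi])
    (show φ j = conj j by rw [hconj, eq_mul_inv_iff_mul_eq₀ hβ, hβj])
  exact ⟨β, hβ, fun x => by rw [hφ, hconj]⟩

theorem eq_coe_re_of_forall_mul_comm {a : ℍ[ℝ]} (h : ∀ x, a * x = x * a) : a = a.re := by
  let i : ℍ[ℝ] := ⟨0, 1, 0, 0⟩
  let j : ℍ[ℝ] := ⟨0, 0, 1, 0⟩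
  have hJ := congrArg QuaternionAlgebra.imJ (h i)
  have hK := congrArg QuaternionAlgebra.imK (h i)
  have hI := congrArg QuaternionAlgebra.imK (h j)
  simp only [imJ_mul, imK_mul] at hJ hK hI
  simp only [mul_zero, sub_self, add_zero, mul_one, zero_add, zero_mul, one_mul, zero_sub,
    sub_zero, i, j] at hJ hK hI
  ext <;> simp only [re_coe, imI_coe, imJ_coe, imK_coe] <;> linarith

theorem conj_star_involutive_iff {σ : ℍ[ℝ] → ℍ[ℝ]} {β : ℍ[ℝ]} (hβ : β ≠ 0)
    (hσ : ∀ x, σ x = β * star x * β⁻¹) :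
    (∀ x, σ (σ x) = x) ↔ star β = β ∨ star β = -β := by
  set γ := β * (star β)⁻¹
  have hσσ (x) : σ (σ x) = γ * x * γ⁻¹ := by
    rw [hσ, hσ, star_mul, star_mul, star_star, star_inv₀, mul_inv_rev, inv_inv]
    simp only [γ, mul_assoc]
  constructor
  · intro hinv
    have hβ' : star β ≠ 0 := star_ne_zero.mpr hβ
    have hγ0 : γ ≠ 0 := mul_ne_zero hβ (inv_ne_zero hβ')
    have hcentral (x) : γ * x = x * γ :=
      ((eq_mul_inv_iff_mul_eq₀ hγ0).mp (by rw [← hσσ, hinv])).symm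
    have hβγ : β = γ * star β := (inv_mul_cancel_right₀ hβ' β).symm
    have hstar : star β = β * γ := by
      conv_lhs => rw [hβγ, star_mul, star_star, eq_coe_re_of_forall_mul_comm hcentral, star_coe,
        ← eq_coe_re_of_forall_mul_comm hcentral]
    have hγγ : γ * γ = 1 := by
      refine mul_right_cancel₀ hβ ?_
      calc γ * γ * β = γ * star β := by rw [mul_assoc, hcentral β, hstar]
        _ = 1 * β := by rw [← hβγ, one_mul]
    rcases mul_self_eq_one_iff.mp hγγ with h | h
    · left; rw [hstar, h, mul_one]
    · right; rw [hstar, h, mul_neg_one]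
  · rintro (h | h) x <;> simp [hσσ, γ, h, hβ]

theorem star_eq_neg_of_sq_eq_neg_one {α : ℍ[ℝ]} (hα : α ^ 2 = -1) : star α = -α := by
  have hnorm : normSq α = 1 := by
    have h := congrArg normSq hα
    rw [map_pow, normSq_neg, map_one] at h
    exact (pow_eq_one_iff_of_nonneg normSq_nonneg two_ne_zero).mp h
  rw [star_eq_neg, ← sq_eq_neg_normSq, hnorm, hα, coe_one]

theorem exists_sq_eq_neg_one_conj_eq {β : ℍ[ℝ]} (hβ : β ≠ 0) (hstar : star β = -β) :
    ∃ α : ℍ[ℝ], α ^ 2 = -1 ∧ ∀ x, β * x * β⁻¹ = α * x * α⁻¹ := by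
  have hnorm : ‖β‖ ≠ 0 := norm_ne_zero_iff.mpr hβ
  refine ⟨‖β‖⁻¹ • β, ?_, fun x => ?_⟩
  · rw [smul_pow, sq_eq_neg_normSq.mpr (star_eq_neg.mp hstar), normSq_eq_norm_mul_self,
      smul_neg, smul_coe, show ‖β‖⁻¹ ^ 2 * (‖β‖ * ‖β‖) = 1 by field_simp, coe_one]
  · rw [smul_inv₀, smul_mul_assoc, smul_mul_assoc, mul_smul_comm, smul_smul, inv_inv,
      inv_mul_cancel₀ hnorm, one_smul]

end Quaternion

/-- An `ℝ`-linear anti-homomorphism `σ : ℍ → ℍ` satisfies `σ² = Id` if and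
only if either `σ` is the standard quaternionic conjugation `σ_c = star`, or
`σ = C_α ∘ σ_c` for some `α ∈ ℍ` with `α² = -1`, where `C_α x = α x α⁻¹`. -/
theorem quaternion_involution_iff (σ : Quaternion ℝ →ₗ[ℝ] Quaternion ℝ)
    (hanti : ∀ x y : Quaternion ℝ, σ (x * y) = σ y * σ x) :
    (∀ x, σ (σ x) = x) ↔
      ((∀ x, σ x = star x) ∨
        ∃ α : Quaternion ℝ, α ^ 2 = -1 ∧ ∀ x, σ x = α * star x * α⁻¹) := by
  constructor
  · intro hinv
    have h1 : σ 1 = 1 := by simpa [hinv] using (hanti (σ 1) 1).symm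
    obtain ⟨β, hβ, hconj⟩ := exists_algHom_eq_conj (σ.starCompAlgHom hanti h1)
    have hσ (x) : σ x = β * star x * β⁻¹ := by simpa using hconj (star x)
    rcases (conj_star_involutive_iff hβ hσ).mp hinv with h | h
    · left
      intro x
      have hβx : Commute β (star x) := star_eq_self.mp h ▸ coe_commute _ _
      rw [hσ, hβx.eq, mul_inv_cancel_right₀ hβ]
    · obtain ⟨α, hα, hαβ⟩ := exists_sq_eq_neg_one_conj_eq hβ h
      exact Or.inr ⟨α, hα, fun x => (hσ x).trans (hαβ _)⟩
  · rintro (h | ⟨α, hα, hσ⟩)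
    · intro x
      rw [h, h, star_star]
    · have hα0 : α ≠ 0 := by
        rintro rfl
        norm_num at hα
      exact (conj_star_involutive_iff hα0 hσ).mpr (Or.inr (star_eq_neg_of_sq_eq_neg_one hα))
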